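/- Let G be a finite abelian group whose order is a positive power of a prime number p. Then the resolving sets of the power graph P_G have the exchange property. -/

import Mathlib

/-!
Every element of `P_G` is adjacent to `1`, so distances are `0`, `1` or `2`, and a vertex
`w ∉ {u, v}` resolves `u, v` exactly when it is adjacent to just one of them. Twins are resolved
only by themselves, hence a resolving set omits at most one vertex of each twin class. When `G`
is an abelian `p`-group this is also sufficient: any two non-twins are separated by some `w` that
has a twin `w'`, and whichever of `w`, `w'` lies in the set separates them. So a minimal
resolving set omits exactly one vertex from each twin class, and the omitted vertex of a class
can be exchanged for any other vertex of it.

To find such a separator, note that `x` and `x⁻¹` are twins: if no separator had a twin, all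
separators would be involutions, which forces `p = 2`. A cyclic `2`-group has a unique
involution, and a case analysis then produces a separator with a twin: either `u⁻¹`, or an
involution `x` such that `x` and `v x` have `1` as their only neighbour.
-/

open SimpleGraph

/-- `W` is a resolving set for the graph `Γ`: any two distinct vertices are
distinguished by their distance to some element of `W`. -/
def IsResolvingSet {V : Type*} (Γ : SimpleGraph V) (W : Set V) : Prop :=
  ∀ u v : V, u ≠ v → ∃ w ∈ W, Γ.dist u w ≠ Γ.dist v w

/-- The metric dimension of a graph: the least cardinality of a resolving set. -/
noncomputable def metricDim {V : Type*} (Γ : SimpleGraph V) : ℕ :=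
  sInf {n | ∃ W : Set V, W.Finite ∧ W.ncard = n ∧ IsResolvingSet Γ W}

/-- A minimal resolving set: a resolving set no proper subset of which resolves. -/
def IsMinimalResolvingSet {V : Type*} (Γ : SimpleGraph V) (W : Set V) : Prop :=
  IsResolvingSet Γ W ∧ ∀ W' : Set V, W' ⊂ W → ¬ IsResolvingSet Γ W'

/-- Two vertices are twins if they have the same open neighborhood or the same
closed neighborhood. -/
def AreTwins {V : Type*} (Γ : SimpleGraph V) (u v : V) : Prop :=
  Γ.neighborSet u = Γ.neighborSet v ∨
    insert u (Γ.neighborSet u) = insert v (Γ.neighborSet v)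

/-- The twin class of a vertex. -/
def twinClass {V : Type*} (Γ : SimpleGraph V) (u : V) : Set V :=
  {v | AreTwins Γ u v}

/-- The number of twin classes of a graph. -/
noncomputable def twinClassCount {V : Type*} (Γ : SimpleGraph V) : ℕ :=
  {S : Set V | ∃ u : V, S = twinClass Γ u}.ncard

/-- Resolving sets of `Γ` have the exchange property. -/
def HasExchangeProperty {V : Type*} (Γ : SimpleGraph V) : Prop :=
  ∀ W₁ W₂ : Set V, IsMinimalResolvingSet Γ W₁ → IsMinimalResolvingSet Γ W₂ →
    ∀ u ∈ W₁, ∃ v ∈ W₂, IsMinimalResolvingSet Γ ((W₁ \ {u}) ∪ {v})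

/-- The (undirected) power graph of a group `G`: distinct `x`, `y` are adjacent
iff one is a positive power of the other. -/
def powerGraph (G : Type*) [Group G] : SimpleGraph G :=
  SimpleGraph.fromRel (fun x y => ∃ m : ℕ, 0 < m ∧ y = x ^ m)

/-- `R{x,y}`: the set of vertices having different distances to `x` and `y`. -/
def Rset {V : Type*} (Γ : SimpleGraph V) (x y : V) : Set V :=
  {z | Γ.dist x z ≠ Γ.dist y z}

open Subgroup

section Twins

variable {V : Type*} {Γ : SimpleGraph V} {u v w w' : V}

def AdjSeparates (Γ : SimpleGraph V) (w u v : V) : Prop :=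
  w ≠ u ∧ w ≠ v ∧ ¬(Γ.Adj u w ↔ Γ.Adj v w)

lemma AdjSeparates.symm (h : AdjSeparates Γ w u v) : AdjSeparates Γ w v u :=
  ⟨h.2.1, h.1, fun h' => h.2.2 h'.symm⟩

lemma AreTwins.refl (u : V) : AreTwins Γ u u := Or.inl rfl

lemma AreTwins.symm (h : AreTwins Γ u v) : AreTwins Γ v u := h.imp Eq.symm Eq.symm

lemma AreTwins.adj_iff (h : AreTwins Γ u v) (hwu : w ≠ u) (hwv : w ≠ v) :
    Γ.Adj u w ↔ Γ.Adj v w := by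
  rcases h with h | h
  · exact Set.ext_iff.mp h w
  · simpa [hwu, hwv] using Set.ext_iff.mp h w

lemma areTwins_iff_forall_adj_iff :
    AreTwins Γ u v ↔ ∀ w, w ≠ u → w ≠ v → (Γ.Adj u w ↔ Γ.Adj v w) := by
  refine ⟨fun h w => h.adj_iff, fun h => ?_⟩
  by_cases hadj : Γ.Adj u v
  · refine Or.inr (Set.ext fun w => ?_)
    by_cases hwu : w = u
    · simp [hwu, hadj.symm]
    by_cases hwv : w = v
    · simp [hwv, hadj]
    simp [hwu, hwv, h w hwu hwv]
  · refine Or.inl (Set.ext fun w => ?_)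
    by_cases hwu : w = u
    · simp [hwu, mt Adj.symm hadj]
    by_cases hwv : w = v
    · simp [hwv, hadj]
    exact h w hwu hwv

lemma exists_adjSeparates_of_not_areTwins (h : ¬AreTwins Γ u v) :
    ∃ w, AdjSeparates Γ w u v := by
  simpa [areTwins_iff_forall_adj_iff, AdjSeparates] using h

lemma AreTwins.trans (h₁ : AreTwins Γ u v) (h₂ : AreTwins Γ v w) : AreTwins Γ u w := by
  rcases eq_or_ne u v with rfl | huv
  · exact h₂
  rcases eq_or_ne v w with rfl | hvw
  · exact h₁
  rcases eq_or_ne u w with rfl | huw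
  · exact .refl u
  rw [areTwins_iff_forall_adj_iff]
  intro a hau haw
  rcases eq_or_ne a v with rfl | hav
  · exact (Γ.adj_comm _ _).trans <| (h₂.adj_iff huv huw).trans <| (Γ.adj_comm _ _).trans <|
      (h₁.adj_iff huw.symm hvw.symm).trans (Γ.adj_comm _ _)
  · exact (h₁.adj_iff hau hav).trans (h₂.adj_iff hav haw)

lemma AdjSeparates.of_areTwins (h : AdjSeparates Γ w u v) (ht : AreTwins Γ w w')
    (hu : w' ≠ u) (hv : w' ≠ v) : AdjSeparates Γ w' u v := by
  refine ⟨hu, hv, fun h' => h.2.2 ?_⟩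
  rw [adj_comm, ht.adj_iff h.1.symm hu.symm, adj_comm, h', adj_comm,
    ← ht.adj_iff h.2.1.symm hv.symm, adj_comm]

lemma AdjSeparates.ne_of_forall_adj {c : V} (hc : ∀ x, x ≠ c → Γ.Adj c x)
    (h : AdjSeparates Γ w u v) : w ≠ c := by
  rintro rfl
  exact h.2.2 (iff_of_true (hc u h.1.symm).symm (hc v h.2.1.symm).symm)

end Twins

section Resolving

variable {V : Type*} {Γ : SimpleGraph V} {c u v w t : V} {W : Set V}

lemma dist_eq_ite_of_forall_adj [DecidableRel Γ.Adj] (hc : ∀ x, x ≠ c → Γ.Adj c x)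
    (huw : u ≠ w) : Γ.dist u w = if Γ.Adj u w then 1 else 2 := by
  split_ifs with h
  · exact dist_eq_one_iff_adj.mpr h
  have hcu : u ≠ c := by rintro rfl; exact h (hc w huw.symm)
  have hcw : w ≠ c := by rintro rfl; exact h (hc u huw).symm
  rw [SimpleGraph.dist, edist_eq_two_iff.mpr ⟨huw, h, c, (hc u hcu).symm, (hc w hcw).symm⟩]
  rfl

lemma dist_ne_dist_iff_of_forall_adj (hc : ∀ x, x ≠ c → Γ.Adj c x) (huv : u ≠ v) :
    Γ.dist u w ≠ Γ.dist v w ↔ w = u ∨ w = v ∨ AdjSeparates Γ w u v := by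
  classical
  rcases eq_or_ne w u with rfl | hwu
  · simp only [SimpleGraph.dist_self, dist_eq_ite_of_forall_adj hc huv.symm]
    split_ifs <;> simp
  rcases eq_or_ne w v with rfl | hwv
  · simp only [SimpleGraph.dist_self, dist_eq_ite_of_forall_adj hc huv]
    split_ifs <;> simp
  rw [dist_eq_ite_of_forall_adj hc hwu.symm, dist_eq_ite_of_forall_adj hc hwv.symm]
  simp only [AdjSeparates, hwu, hwv]
  split_ifs <;> simp_all

lemma IsResolvingSet.mono {W' : Set V} (h : IsResolvingSet Γ W) (hW : W ⊆ W') :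
    IsResolvingSet Γ W' := fun u v huv =>
  let ⟨w, hw, hd⟩ := h u v huv
  ⟨w, hW hw, hd⟩

variable (Γ) in
def HasTwin (w : V) : Prop := ∃ w', w' ≠ w ∧ AreTwins Γ w w'

variable (Γ) in
def HasTwinSeparators : Prop :=
  ∀ u v, ¬AreTwins Γ u v → ∃ w, AdjSeparates Γ w u v ∧ HasTwin Γ w

lemma isResolvingSet_iff_pairwise_not_areTwins (hc : ∀ x, x ≠ c → Γ.Adj c x)
    (hsep : HasTwinSeparators Γ) :
    IsResolvingSet Γ W ↔ Wᶜ.Pairwise fun t t' => ¬AreTwins Γ t t' := by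
  constructor
  · intro hres t ht t' ht' htt' htw
    obtain ⟨w, hw, hd⟩ := hres t t' htt'
    rcases (dist_ne_dist_iff_of_forall_adj hc htt').mp hd with rfl | rfl | hsw
    · exact ht hw
    · exact ht' hw
    · exact hsw.2.2 (htw.adj_iff hsw.1 hsw.2.1)
  · intro hW u v huv
    have resolves := fun w => (dist_ne_dist_iff_of_forall_adj hc huv (w := w)).mpr
    by_cases hu : u ∈ W
    · exact ⟨u, hu, resolves u (Or.inl rfl)⟩
    by_cases hv : v ∈ W
    · exact ⟨v, hv, resolves v (Or.inr (Or.inl rfl))⟩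
    obtain ⟨w, hw, w', hw'w, htw⟩ := hsep u v (hW hu hv huv)
    by_cases hwW : w ∈ W
    · exact ⟨w, hwW, resolves w (Or.inr (Or.inr hw))⟩
    have hw'W : w' ∈ W := by_contra fun hw'W => hW hw'W hwW hw'w htw.symm
    refine ⟨w', hw'W, resolves w' (Or.inr (Or.inr (hw.of_areTwins htw ?_ ?_)))⟩
    · rintro rfl; exact hu hw'W
    · rintro rfl; exact hv hw'W

lemma isMinimalResolvingSet_iff_minimal :
    IsMinimalResolvingSet Γ W ↔ Minimal (IsResolvingSet Γ) W := by
  rw [minimal_iff_forall_lt]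
  rfl

lemma isMinimalResolvingSet_iff (hc : ∀ x, x ≠ c → Γ.Adj c x) (hsep : HasTwinSeparators Γ) :
    IsMinimalResolvingSet Γ W ↔ (Wᶜ.Pairwise fun t t' => ¬AreTwins Γ t t') ∧
      ∀ u ∈ W, ∃ t ∉ W, t ≠ u ∧ AreTwins Γ u t := by
  rw [isMinimalResolvingSet_iff_minimal,
    Set.minimal_iff_forall_sdiff_singleton fun _ _ h hW => h.mono hW]
  simp only [isResolvingSet_iff_pairwise_not_areTwins hc hsep, Set.compl_sdiff,
    Set.singleton_union, Set.pairwise_insert]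
  refine and_congr_right fun hW => forall₂_congr fun u _ => ?_
  simp only [hW, true_and, not_forall, not_and_or, not_not, or_iff_left_of_imp AreTwins.symm,
    exists_prop, Set.mem_compl_iff, ne_comm]

end Resolving

section Exchange

variable {V : Type*} {Γ : SimpleGraph V} {c u t : V} {W : Set V}

lemma IsMinimalResolvingSet.diff_union_of_areTwins (hc : ∀ x, x ≠ c → Γ.Adj c x)
    (hsep : HasTwinSeparators Γ) (hW : IsMinimalResolvingSet Γ W) (hu : u ∈ W) (ht : t ∉ W)
    (hut : AreTwins Γ u t) : IsMinimalResolvingSet Γ ((W \ {u}) ∪ {t}) := by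
  rw [isMinimalResolvingSet_iff hc hsep] at hW ⊢
  obtain ⟨hpair, htwin⟩ := hW
  have htu : t ≠ u := by rintro rfl; exact ht hu
  have hu' : u ∉ (W \ {u}) ∪ {t} := by simp [htu.symm]
  refine ⟨fun a ha₀ b hb₀ hab hab' => ?_, fun a ha => ?_⟩
  · have hout : ∀ a, a ∉ (W \ {u}) ∪ {t} → a ≠ t ∧ (a ∉ W ∨ a = u) := by
      intro a; simp only [Set.mem_union, Set.mem_sdiff, Set.mem_singleton_iff]; tauto
    obtain ⟨hat, ha | rfl⟩ := hout a ha₀ <;> obtain ⟨hbt, hb | rfl⟩ := hout b hb₀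
    · exact hpair ha hb hab hab'
    · exact hpair ha ht hat (hab'.trans hut)
    · exact hpair ht hb hbt.symm (hut.symm.trans hab')
    · exact hab rfl
  · simp only [Set.mem_union, Set.mem_sdiff, Set.mem_singleton_iff] at ha
    obtain ⟨haW, hau⟩ | rfl := ha
    · obtain ⟨s, hs, hsa, has⟩ := htwin a haW
      by_cases hst : s = t
      · subst hst
        exact ⟨u, hu', Ne.symm hau, has.trans hut.symm⟩
      · exact ⟨s, by simp [hs, hst], hsa, has⟩
    · exact ⟨u, hu', htu.symm, hut.symm⟩

theorem hasExchangeProperty_of_hasTwinSeparators (hc : ∀ x, x ≠ c → Γ.Adj c x)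
    (hsep : HasTwinSeparators Γ) : HasExchangeProperty Γ := by
  intro W₁ W₂ h₁ h₂ u hu
  obtain ⟨t, ht, htu, hut⟩ := ((isMinimalResolvingSet_iff hc hsep).mp h₁).2 u hu
  by_cases huW₂ : u ∈ W₂
  · refine ⟨u, huW₂, ?_⟩
    rwa [Set.sdiff_union_self, Set.union_eq_self_of_subset_right (Set.singleton_subset_iff.mpr hu)]
  have htW₂ : t ∈ W₂ := by_contra fun htW₂ =>
    ((isMinimalResolvingSet_iff hc hsep).mp h₂).1 huW₂ htW₂ htu.symm hut
  exact ⟨t, htW₂, h₁.diff_union_of_areTwins hc hsep hu ht hut⟩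

end Exchange

section Involutions

variable {G : Type*} [Group G] {g t x y u v : G}

lemma mul_ne_one_of_notMem_zpowers (hx : x ∉ zpowers v) : v * x ≠ 1 := fun h =>
  hx (mul_eq_one_iff_inv_eq.mp h ▸ inv_mem (mem_zpowers v))

lemma eq_one_or_eq_of_mem_zpowers_of_sq_eq_one [Finite G] (ht : t ^ 2 = 1)
    (hy : y ∈ zpowers t) : y = 1 ∨ y = t := by
  obtain ⟨n, rfl⟩ := mem_powers_iff_mem_zpowers.mpr hy
  beta_reduce
  rw [← Nat.mod_add_div n 2, pow_add, pow_mul, ht, one_pow, mul_one]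
  rcases Nat.mod_two_eq_zero_or_one n with h | h <;> simp [h]

lemma eq_of_mem_zpowers_of_sq_eq_one [Finite G] (hx : x ∈ zpowers g) (hy : y ∈ zpowers g)
    (hx2 : x ^ 2 = 1) (hy2 : y ^ 2 = 1) (hx1 : x ≠ 1) (hy1 : y ≠ 1) : x = y := by
  classical
  let _ : Fintype (zpowers g) := Fintype.ofFinite _
  by_contra hxy
  let a : zpowers g := ⟨x, hx⟩
  let b : zpowers g := ⟨y, hy⟩
  have hsub : ({a, b, 1} : Finset (zpowers g)) ⊆ ({z | z ^ 2 = 1} : Finset (zpowers g)) := by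
    intro z hz
    simp only [Finset.mem_insert, Finset.mem_singleton] at hz
    rcases hz with rfl | rfl | rfl <;> simp [a, b, ← Subtype.val_inj, hx2, hy2]
  have hcard : ({a, b, 1} : Finset (zpowers g)).card = 3 :=
    Finset.card_eq_three.mpr ⟨a, b, 1, by simpa [a, b, ← Subtype.val_inj] using hxy,
      by simpa [a, ← Subtype.val_inj] using hx1, by simpa [b, ← Subtype.val_inj] using hy1,
      rfl⟩
  have := (Finset.card_le_card hsub).trans (IsCyclic.card_pow_eq_one_le two_pos)
  omega

lemma IsPGroup.mem_zpowers_of_sq_eq_one [Finite G] (hG : IsPGroup 2 G) (hx : x ∈ zpowers u)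
    (hx2 : x ^ 2 = 1) (hx1 : x ≠ 1) (hv : v ∈ zpowers u) (hv1 : v ≠ 1) : x ∈ zpowers v := by
  obtain ⟨k, hk⟩ := IsPGroup.iff_orderOf.mp hG v
  have hk0 : k ≠ 0 := by
    rintro rfl
    exact hv1 (orderOf_eq_one_iff.mp hk)
  have hy : orderOf (v ^ (orderOf v / 2)) = 2 :=
    orderOf_pow_orderOf_div (orderOf_pos v).ne' (hk ▸ dvd_pow_self 2 hk0)
  have hvu : zpowers v ≤ zpowers u := zpowers_le.mpr hv
  rw [eq_of_mem_zpowers_of_sq_eq_one hx (hvu (pow_mem (mem_zpowers v) _)) hx2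
    (hy ▸ pow_orderOf_eq_one _) hx1 (by rintro h; simp [h] at hy)]
  exact pow_mem (mem_zpowers v) _

lemma IsPGroup.eq_two_of_sq_eq_one {p : ℕ} [Fact p.Prime] (hG : IsPGroup p G) (hx2 : x ^ 2 = 1)
    (hx1 : x ≠ 1) : p = 2 := by
  obtain ⟨k, hk⟩ := IsPGroup.iff_orderOf.mp hG x
  rw [orderOf_eq_prime hx2 hx1] at hk
  exact ((Nat.prime_two.pow_eq_iff).mp hk.symm).1

end Involutions

section PowerGraph

variable {G : Type*} [Group G] [Finite G] {x y t u v w : G}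

lemma powerGraph_adj_iff :
    (powerGraph G).Adj x y ↔ x ≠ y ∧ (y ∈ zpowers x ∨ x ∈ zpowers y) := by
  have hpow : ∀ a b : G, (∃ m : ℕ, 0 < m ∧ b = a ^ m) ↔ b ∈ zpowers a := by
    refine fun a b => ⟨fun ⟨m, _, hm⟩ => hm ▸ pow_mem (mem_zpowers a) m, fun hb => ?_⟩
    obtain ⟨n, rfl⟩ := mem_powers_iff_mem_zpowers.mpr hb
    exact ⟨n + orderOf a, by have := orderOf_pos a; omega,
      by rw [pow_add, pow_orderOf_eq_one, mul_one]⟩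
  rw [powerGraph, fromRel_adj, hpow, hpow]

lemma powerGraph_adj_one (hx : x ≠ 1) : (powerGraph G).Adj 1 x :=
  powerGraph_adj_iff.mpr ⟨hx.symm, Or.inr (one_mem _)⟩

lemma areTwins_powerGraph_of_zpowers_eq (h : zpowers x = zpowers y) :
    AreTwins (powerGraph G) x y := by
  rw [areTwins_iff_forall_adj_iff]
  intro w hwx hwy
  simp only [powerGraph_adj_iff, ← zpowers_le, h, ne_eq, hwx.symm, hwy.symm]

lemma areTwins_inv_powerGraph (x : G) : AreTwins (powerGraph G) x x⁻¹ :=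
  areTwins_powerGraph_of_zpowers_eq zpowers_inv.symm

lemma adjSeparates_powerGraph_one_left_iff :
    AdjSeparates (powerGraph G) w 1 v ↔ w ≠ 1 ∧ w ≠ v ∧ ¬(powerGraph G).Adj v w :=
  and_congr_right fun hw1 => and_congr_right fun _ => by simp [powerGraph_adj_one hw1]

lemma adjSeparates_inv_powerGraph (hG : IsPGroup 2 G) (hxu : x ∈ zpowers u) (hx2 : x ^ 2 = 1)
    (hx1 : x ≠ 1) (hux : x ≠ u) (hxv : x ∉ zpowers v) (hv1 : v ≠ 1) :
    AdjSeparates (powerGraph G) u⁻¹ u v := by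
  have hvu : v ∉ zpowers u := fun h => hxv (hG.mem_zpowers_of_sq_eq_one hxu hx2 hx1 h hv1)
  have hu : u⁻¹ ≠ u := fun h =>
    (eq_one_or_eq_of_mem_zpowers_of_sq_eq_one ((pow_two u).trans (inv_eq_iff_mul_eq_one.mp h))
      hxu).elim hx1 hux
  refine ⟨hu, fun h => hvu (h ▸ inv_mem (mem_zpowers u)), ?_⟩
  have hadj : (powerGraph G).Adj u u⁻¹ :=
    powerGraph_adj_iff.mpr ⟨hu.symm, Or.inl (inv_mem (mem_zpowers u))⟩
  simp only [hadj, true_iff, powerGraph_adj_iff, zpowers_inv, not_and, not_or]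
  exact fun _ => ⟨fun h => hxv (zpowers_le.mpr (inv_mem_iff.mp h) hxu), hvu⟩

end PowerGraph

section CommGroup

variable {G : Type*} [CommGroup G] [Finite G] {x t u v : G}

lemma sq_eq_one_of_forall_adjSeparates_one (hG : IsPGroup 2 G)
    (hD : ∀ w, AdjSeparates (powerGraph G) w 1 v → w ^ 2 = 1) (hv1 : v ≠ 1)
    (hx2 : x ^ 2 = 1) (hx1 : x ≠ 1) (hxv : x ∉ zpowers v) : v ^ 2 = 1 := by
  by_cases hadj : (powerGraph G).Adj v (v * x)
  · exfalso
    rcases (powerGraph_adj_iff.mp hadj).2 with hz | hv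
    · exact hxv ((Subgroup.mul_mem_cancel_left _ (mem_zpowers v)).mp hz)
    · exact hxv (hG.mem_zpowers_of_sq_eq_one
        ((Subgroup.mul_mem_cancel_left _ hv).mp (mem_zpowers _)) hx2 hx1 hv hv1)
  · have hz2 := hD (v * x) (adjSeparates_powerGraph_one_left_iff.mpr
      ⟨mul_ne_one_of_notMem_zpowers hxv, by simpa using hx1, hadj⟩)
    rwa [mul_pow, hx2, mul_one] at hz2

lemma neighborSet_powerGraph_eq_of_forall_adjSeparates_one
    (hD : ∀ w, AdjSeparates (powerGraph G) w 1 v → w ^ 2 = 1) (hv2 : v ^ 2 = 1) (hv1 : v ≠ 1)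
    (ht2 : t ^ 2 = 1) (ht1 : t ≠ 1) (htv : t ≠ v) : (powerGraph G).neighborSet t = {1} := by
  have htv' : t ∉ zpowers v := fun h =>
    (eq_one_or_eq_of_mem_zpowers_of_sq_eq_one hv2 h).elim ht1 htv
  ext y
  simp only [mem_neighborSet, Set.mem_singleton_iff]
  refine ⟨fun hty => ?_, fun hy => hy ▸ (powerGraph_adj_one ht1).symm⟩
  by_contra hy1
  obtain ⟨hty', hyt | hty''⟩ := powerGraph_adj_iff.mp hty
  · exact (eq_one_or_eq_of_mem_zpowers_of_sq_eq_one ht2 hyt).elim hy1 hty'.symm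
  have hyv : y ≠ v := by rintro rfl; exact htv' hty''
  by_cases hvy : (powerGraph G).Adj v y
  · rcases (powerGraph_adj_iff.mp hvy).2 with hy | hv
    · exact (eq_one_or_eq_of_mem_zpowers_of_sq_eq_one hv2 hy).elim hy1 hyv
    · exact htv (eq_of_mem_zpowers_of_sq_eq_one hty'' hv ht2 hv2 ht1 hv1)
  · have hy2 := hD y (adjSeparates_powerGraph_one_left_iff.mpr ⟨hy1, hyv, hvy⟩)
    exact (eq_one_or_eq_of_mem_zpowers_of_sq_eq_one hy2 hty'').elim ht1 hty'

lemma hasTwin_of_adjSeparates_one (hG : IsPGroup 2 G)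
    (hD : ∀ w, AdjSeparates (powerGraph G) w 1 v → w ^ 2 = 1)
    (hx : AdjSeparates (powerGraph G) x 1 v) : HasTwin (powerGraph G) x := by
  obtain ⟨hx1, hxv, hvx⟩ := adjSeparates_powerGraph_one_left_iff.mp hx
  have hx2 := hD x hx
  have hv1 : v ≠ 1 := by rintro rfl; exact hvx (powerGraph_adj_one hx1)
  have hxv' : x ∉ zpowers v := fun h => hvx (powerGraph_adj_iff.mpr ⟨hxv.symm, Or.inl h⟩)
  have hv2 := sq_eq_one_of_forall_adjSeparates_one hG hD hv1 hx2 hx1 hxv'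
  refine ⟨v * x, by simpa using hv1, Or.inl ?_⟩
  rw [neighborSet_powerGraph_eq_of_forall_adjSeparates_one hD hv2 hv1 hx2 hx1 hxv,
    neighborSet_powerGraph_eq_of_forall_adjSeparates_one hD hv2 hv1
      (by rw [mul_pow, hv2, hx2, one_mul]) (mul_ne_one_of_notMem_zpowers hxv') (by simpa using hx1)]

lemma exists_adjSeparates_hasTwin_of_adj (hG : IsPGroup 2 G)
    (hD : ∀ w, AdjSeparates (powerGraph G) w u v → w ^ 2 = 1)
    (hx : AdjSeparates (powerGraph G) x u v) (hux : (powerGraph G).Adj u x) :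
    ∃ w, AdjSeparates (powerGraph G) w u v ∧ HasTwin (powerGraph G) w := by
  have hx2 := hD x hx
  have hx1 : x ≠ 1 := hx.ne_of_forall_adj fun _ => powerGraph_adj_one
  rcases eq_or_ne u 1 with rfl | hu1
  · exact ⟨x, hx, hasTwin_of_adjSeparates_one hG hD hx⟩
  have hvx : ¬(powerGraph G).Adj v x := fun h => hx.2.2 (iff_of_true hux h)
  have hxu : x ∈ zpowers u := (powerGraph_adj_iff.mp hux).2.resolve_right fun h =>
    (eq_one_or_eq_of_mem_zpowers_of_sq_eq_one hx2 h).elim hu1 hx.1.symm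
  have hxv : x ∉ zpowers v := fun h => hvx (powerGraph_adj_iff.mpr ⟨hx.2.1.symm, Or.inl h⟩)
  have hv1 : v ≠ 1 := by rintro rfl; exact hvx (powerGraph_adj_one hx1)
  have hsep := adjSeparates_inv_powerGraph hG hxu hx2 hx1 hx.1 hxv hv1
  exact ⟨u⁻¹, hsep, u, hsep.1.symm, (areTwins_inv_powerGraph u).symm⟩

theorem hasTwinSeparators_powerGraph {p : ℕ} [Fact p.Prime] (hG : IsPGroup p G) :
    HasTwinSeparators (powerGraph G) := by
  intro u v hnt
  by_cases hD : ∀ w, AdjSeparates (powerGraph G) w u v → w ^ 2 = 1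
  swap
  · obtain ⟨w, hw, hw2⟩ := not_forall₂.mp hD
    exact ⟨w, hw, w⁻¹, fun h => hw2 ((pow_two w).trans (inv_eq_iff_mul_eq_one.mp h)),
      areTwins_inv_powerGraph w⟩
  obtain ⟨x, hx⟩ := exists_adjSeparates_of_not_areTwins hnt
  obtain rfl : p = 2 :=
    hG.eq_two_of_sq_eq_one (hD x hx) (hx.ne_of_forall_adj fun _ => powerGraph_adj_one)
  by_cases hux : (powerGraph G).Adj u x
  · exact exists_adjSeparates_hasTwin_of_adj hG hD hx hux
  · have hvx : (powerGraph G).Adj v x := by_contra fun hvx => hx.2.2 (iff_of_false hux hvx)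
    obtain ⟨w, hw, hw'⟩ :=
      exists_adjSeparates_hasTwin_of_adj hG (fun w hw => hD w hw.symm) hx.symm hvx
    exact ⟨w, hw.symm, hw'⟩

end CommGroup

theorem exchange_powerGraph_abelian_primePower_general
    (G : Type*) [CommGroup G] [Fintype G]
    (p m : ℕ) (hp : p.Prime) (hcard : Fintype.card G = p ^ m) :
    HasExchangeProperty (powerGraph G) :=
  have : Fact p.Prime := ⟨hp⟩
  hasExchangeProperty_of_hasTwinSeparators (fun _ => powerGraph_adj_one)
    (hasTwinSeparators_powerGraph (IsPGroup.of_card (Nat.card_eq_fintype_card.trans hcard)))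

/-- The power graph of a finite abelian group of prime power order
has the exchange property. -/
theorem exchange_powerGraph_abelian_primePower
    (G : Type*) [CommGroup G] [Fintype G]
    (p m : ℕ) (hp : p.Prime) (hm : 1 ≤ m) (hcard : Fintype.card G = p ^ m) :
    HasExchangeProperty (powerGraph G) :=
  exchange_powerGraph_abelian_primePower_general G p m hp hcard
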